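/- If G contains C4 as a minor, then the maximum matching width of G is at least 2. -/

import Mathlib

open SimpleGraph

/-- Size of a maximum matching in the bipartite graph of edges of `G` crossing `(A, Aᶜ)`. -/
noncomputable def mmVal {V : Type*} (G : SimpleGraph V) (A : Set V) : ℕ :=
  sSup {n | ∃ M : Finset (V × V),
    (∀ p ∈ M, p.1 ∈ A ∧ p.2 ∉ A ∧ G.Adj p.1 p.2) ∧
    (∀ p ∈ M, ∀ q ∈ M, p ≠ q → p.1 ≠ q.1 ∧ p.2 ≠ q.2) ∧ M.card = n}

/-- A branch-decomposition over the vertex set of `G`: a finite subcubic tree together with a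
bijection between its leaves and the vertices of `G`. -/
structure BranchDecomp {V : Type*} (G : SimpleGraph V) where
  B : Type
  finB : Finite B
  T : SimpleGraph B
  isTree : T.IsTree
  subcubic : ∀ b : B, (T.neighborSet b).ncard = 1 ∨ (T.neighborSet b).ncard = 3
  L : {b : B // (T.neighborSet b).ncard = 1} ≃ V

/-- The set of vertices of `G` whose leaves lie on the `u`-side of the tree edge `uw`. -/
noncomputable def BranchDecomp.side {V : Type*} {G : SimpleGraph V} (D : BranchDecomp G)
    (u w : D.B) : Set V :=
  {x : V | (D.T.deleteEdges {s(u, w)}).Reachable (D.L.symm x).1 u}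

/-- The width of a branch-decomposition is at most `k`. -/
def BranchDecomp.widthLE {V : Type*} {G : SimpleGraph V} (D : BranchDecomp G) (k : ℕ) : Prop :=
  ∀ u w : D.B, D.T.Adj u w → mmVal G (D.side u w) ≤ k

/-- The maximum matching width of `G`. -/
noncomputable def mmw {V : Type*} (G : SimpleGraph V) : ℕ :=
  sInf {k | ∃ D : BranchDecomp G, D.widthLE k}
/-- `H` is a minor of `G`: there is a family of nonempty, pairwise disjoint, connected branch
sets in `G` indexed by the vertices of `H`, with edges of `H` realized by edges of `G`. -/
def IsMinor {W : Type*} {V : Type*} (H : SimpleGraph W) (G : SimpleGraph V) : Prop :=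
  ∃ φ : W → Set V,
    (∀ w, (φ w).Nonempty) ∧
    (∀ w, (G.induce (φ w)).Connected) ∧
    (∀ w w', w ≠ w' → Disjoint (φ w) (φ w')) ∧
    (∀ w w', H.Adj w w' → ∃ a ∈ φ w, ∃ b ∈ φ w', G.Adj a b)

/-- The `k × k` grid graph: vertices `(i, j)`, edges between vertices at Manhattan distance 1. -/
def gridGraph (k : ℕ) : SimpleGraph (Fin k × Fin k) :=
  SimpleGraph.fromRel (fun p q =>
    (p.1 = q.1 ∧ (p.2 : ℕ) + 1 = (q.2 : ℕ)) ∨ (p.2 = q.2 ∧ (p.1 : ℕ) + 1 = (q.1 : ℕ)))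

/-- The row `R_j` of the `k × k` grid. -/
def gridRow (k : ℕ) (j : Fin k) : Set (Fin k × Fin k) := {p | p.2 = j}

/-- The column `C_i` of the `k × k` grid. -/
def gridCol (k : ℕ) (i : Fin k) : Set (Fin k × Fin k) := {p | p.1 = i}

/-- `X` is small: `mm(X) < k` and `X` contains no full row. -/
def GridSmall (k : ℕ) (X : Set (Fin k × Fin k)) : Prop :=
  mmVal (gridGraph k) X < k ∧ ∀ j : Fin k, ¬ gridRow k j ⊆ X

/-- `G` is `k`-connected: `|V(G)| ≥ k` and deleting fewer than `k` vertices leaves `G`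
connected. -/
def KConnected {V : Type*} (k : ℕ) (G : SimpleGraph V) : Prop :=
  k ≤ Nat.card V ∧ ∀ X : Set V, X.ncard < k → (G.induce Xᶜ).Connected

/-- A block of `G`: a bridge (with its two endpoints), or a maximal 2-connected induced
subgraph. -/
def IsBlock {V : Type*} (G : SimpleGraph V) (Bs : Set V) : Prop :=
  (∃ a b : V, G.Adj a b ∧ G.IsBridge s(a, b) ∧ Bs = {a, b}) ∨
  (KConnected 2 (G.induce Bs) ∧
    ∀ B' : Set V, Bs ⊆ B' → KConnected 2 (G.induce B') → B' = Bs)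

/-- A tree-representation of `G`: a finite subcubic tree `T` and nontrivial subtrees `F x`
for each vertex `x` such that adjacent vertices have intersecting subtrees. -/
structure TreeRep {V : Type*} (G : SimpleGraph V) where
  B : Type
  finB : Finite B
  T : SimpleGraph B
  isTree : T.IsTree
  subcubic : ∀ b : B, (T.neighborSet b).ncard = 1 ∨ (T.neighborSet b).ncard = 3
  F : V → Set B
  nontrivial : ∀ x : V, ∃ u w : B, u ∈ F x ∧ w ∈ F x ∧ T.Adj u w
  subtree : ∀ x : V, (T.induce (F x)).Connected
  adjMeet : ∀ x y : V, G.Adj x y → (F x ∩ F y).Nonempty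

/-- Every edge of the tree lies in at most `k` of the subtrees. -/
def TreeRep.widthLE {V : Type*} {G : SimpleGraph V} (R : TreeRep G) (k : ℕ) : Prop :=
  ∀ u w : R.B, R.T.Adj u w → {x : V | u ∈ R.F x ∧ w ∈ R.F x}.ncard ≤ k

/-- Contraction of the edge `uv` of `G` (the merged vertex is `u`). -/
def contractEdge {V : Type*} (G : SimpleGraph V) (u v : V) : SimpleGraph {x : V // x ≠ v} :=
  SimpleGraph.fromRel (fun x y =>
    G.Adj x.1 y.1 ∨ (x.1 = u ∧ G.Adj v y.1) ∨ (y.1 = u ∧ G.Adj v x.1))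


/-!
Fix a branch-decomposition `(T, L)` of `G` and a representative vertex in each of the four branch
sets of a `C₄`-model. Since `T` is subcubic, some edge of `T` separates the four corresponding
leaves two against two: among the oriented edges having at least two of these leaves beyond them,
take one whose far side is smallest; each of the (at most two) edges further out carries at most
one of the leaves. Let `A` be one side of that edge. A branch set meeting both `A` and its
complement is connected, so it contains an edge crossing the cut; a branch set that is not split
lies on the side of its representative, so the edges of the model between such sets cross the cut
when their representatives lie on different sides. A case check on `C₄` always gives two such
crossing edges with distinct endpoints, so that tree edge has width at least `2`.

`mmw G` is an infimum, so a decomposition must also be shown to exist: subcubic trees with any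
number `n ≥ 2` of leaves are grown from a single edge by hanging two new leaves on an old one.
-/

namespace SimpleGraph

section EdgeSide

variable {B : Type*} (T : SimpleGraph B)

def edgeSide (u w : B) : Set B := {x | (T.deleteEdges {s(u, w)}).Reachable x u}

variable {T} {u w x z : B}

lemma mem_edgeSide_self : u ∈ T.edgeSide u w := Reachable.refl u

lemma mem_edgeSide_swap : x ∈ T.edgeSide w u ↔ (T.deleteEdges {s(u, w)}).Reachable x w := by
  rw [edgeSide, Set.mem_ofPred_eq, Sym2.eq_swap]

lemma Preconnected.mem_edgeSide_or_mem_edgeSide (hT : T.Preconnected) (u w x : B) :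
    x ∈ T.edgeSide u w ∨ x ∈ T.edgeSide w u := by
  by_contra! hx
  obtain ⟨d, -, hd, hd'⟩ := (hT u x).some.exists_boundary_dart (T.edgeSide u w ∪ T.edgeSide w u)
    (.inl mem_edgeSide_self) (by simpa using hx)
  apply hd'
  by_cases he : s(d.fst, d.snd) = s(u, w)
  · rcases Sym2.eq_iff.1 he with ⟨-, h⟩ | ⟨-, h⟩
    · exact .inr (h ▸ mem_edgeSide_self)
    · exact .inl (h ▸ mem_edgeSide_self)
  · have hadj : (T.deleteEdges {s(u, w)}).Adj d.snd d.fst := by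
      simpa [Sym2.eq_swap, he] using d.adj.symm
    rcases hd with hd | hd
    · exact .inl (hadj.reachable.trans hd)
    · exact .inr (mem_edgeSide_swap.2 (hadj.reachable.trans (mem_edgeSide_swap.1 hd)))

lemma IsAcyclic.disjoint_edgeSide (hT : T.IsAcyclic) (huw : T.Adj u w) :
    Disjoint (T.edgeSide u w) (T.edgeSide w u) :=
  Set.disjoint_left.2 fun _ hu hw =>
    isAcyclic_iff_forall_adj_isBridge.1 hT huw (hu.symm.trans (mem_edgeSide_swap.1 hw))

lemma exists_adj_mem_edgeSide (hx : x ∈ T.edgeSide w u) (hxw : x ≠ w) :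
    ∃ z, T.Adj w z ∧ z ≠ u ∧ x ∈ T.edgeSide z w := by
  classical
  obtain ⟨p, hp⟩ := (show (T.deleteEdges {s(w, u)}).Reachable w x from hx.symm).some.toPath
  cases p with
  | nil => exact absurd rfl hxw
  | cons hadj tail =>
    rw [Walk.cons_isPath_iff] at hp
    rw [deleteEdges_adj, Set.mem_singleton_iff] at hadj
    refine ⟨_, hadj.1, fun h => hadj.2 (by rw [h]), ?_⟩
    refine (reachable_deleteEdges_iff_exists_walk.2 ⟨(tail.mapLe (deleteEdges_le _)).reverse, ?_⟩)
    simp only [Walk.edges_reverse, List.mem_reverse, Walk.edges_mapLe_eq_edges]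
    exact fun h => hp.2 (tail.snd_mem_support_of_mem_edges h)

lemma IsAcyclic.edgeSide_ssubset (hT : T.IsAcyclic) (hwz : T.Adj w z)
    (hzu : z ≠ u) : T.edgeSide z w ⊂ T.edgeSide w u := by
  classical
  refine Set.ssubset_iff_subset_ne.2 ⟨fun x hx => ?_, fun h => ?_⟩
  · obtain ⟨q, hq⟩ := reachable_deleteEdges_iff_exists_walk.1 hx
    have hwq : w ∉ q.support := fun hw => isAcyclic_iff_forall_adj_isBridge.1 hT hwz.symm
      (reachable_deleteEdges_iff_exists_walk.2 ⟨(q.dropUntil w hw).reverse,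
        by simpa using fun h => hq (q.edges_dropUntil_subset_edges hw h)⟩)
    refine mem_edgeSide_swap.2 (reachable_deleteEdges_iff_exists_walk.2 ⟨q.concat hwz.symm, ?_⟩)
    rw [Walk.edges_concat, List.concat_eq_append, List.mem_append, List.mem_singleton, not_or,
      Sym2.eq_iff, not_or]
    exact ⟨fun h => hwq (q.snd_mem_support_of_mem_edges h), fun h => hzu h.1.symm,
      fun h => hwz.ne h.2⟩
  · exact Set.disjoint_left.1 (hT.disjoint_edgeSide hwz) mem_edgeSide_self
      (h ▸ mem_edgeSide_self)

lemma edgeSide_subset_singleton (hb : T.neighborSet w = {u}) : T.edgeSide w u ⊆ {w} := by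
  intro x hx
  by_contra hxw
  obtain ⟨z, hwz, hzu, -⟩ := exists_adj_mem_edgeSide hx hxw
  exact hzu (by simpa [hb] using (show z ∈ T.neighborSet w from hwz))

lemma ncard_inter_edgeSide_le_two [Finite B] {S : Set B} (hdeg : (T.neighborSet w).ncard ≤ 3)
    (hwu : T.Adj w u) (hwS : w ∉ S)
    (hS : ∀ z, T.Adj w z → z ≠ u → (S ∩ T.edgeSide z w).ncard ≤ 1) :
    (S ∩ T.edgeSide w u).ncard ≤ 2 := by
  have hchild (x : B) (hx : x ∈ S ∩ T.edgeSide w u) :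
      ∃ z, z ∈ T.neighborSet w \ {u} ∧ x ∈ S ∩ T.edgeSide z w := by
    obtain ⟨z, hwz, hzu, hxz⟩ := exists_adj_mem_edgeSide hx.2 (ne_of_mem_of_not_mem hx.1 hwS)
    exact ⟨z, ⟨hwz, hzu⟩, hx.1, hxz⟩
  choose! f hf using hchild
  have hinj : Set.InjOn f (S ∩ T.edgeSide w u) := fun x hx y hy hxy =>
    (Set.ncard_le_one_iff (Set.toFinite _)).1 (hS _ (hf x hx).1.1 (hf x hx).1.2) (hf x hx).2
      (hxy ▸ (hf y hy).2)
  calc (S ∩ T.edgeSide w u).ncard ≤ (T.neighborSet w \ {u}).ncard :=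
        Set.ncard_le_ncard_of_injOn f (fun x hx => (hf x hx).1) hinj
    _ = (T.neighborSet w).ncard - 1 := Set.ncard_sdiff_singleton_of_mem hwu
    _ ≤ 2 := by omega

lemma IsTree.exists_adj_ncard_inter_edgeSide_eq_two [Finite B] (hT : T.IsTree)
    (hdeg : ∀ v, (T.neighborSet v).ncard ≤ 3) {S : Set B}
    (hS : ∀ b ∈ S, (T.neighborSet b).ncard = 1) (h3 : 3 ≤ S.ncard) :
    ∃ u w, T.Adj u w ∧ (S ∩ T.edgeSide u w).ncard = 2 := by
  have hleaf (b : B) (hb : b ∈ S) (u : B) (hbu : T.Adj b u) : S ∩ T.edgeSide b u ⊆ {b} := by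
    obtain ⟨a, ha⟩ := Set.ncard_eq_one.1 (hS b hb)
    obtain rfl : u = a := by simpa [ha] using (show u ∈ T.neighborSet b from hbu)
    exact Set.inter_subset_right.trans (edgeSide_subset_singleton ha)
  let P : Set (B × B) := {p | T.Adj p.1 p.2 ∧ 2 ≤ (S ∩ T.edgeSide p.2 p.1).ncard}
  have hP : P.Nonempty := by
    obtain ⟨b, hb⟩ := Set.nonempty_of_ncard_ne_zero (by omega : S.ncard ≠ 0)
    obtain ⟨u, hbu⟩ :=
      Set.nonempty_of_ncard_ne_zero (by simp [hS b hb] : (T.neighborSet b).ncard ≠ 0)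
    have hsub : S \ {b} ⊆ S ∩ T.edgeSide u b := fun x ⟨hxS, hxb⟩ =>
      ⟨hxS, (hT.connected.preconnected.mem_edgeSide_or_mem_edgeSide u b x).resolve_right
        fun hx => hxb (hleaf b hb u hbu ⟨hxS, hx⟩)⟩
    have := Set.ncard_le_ncard hsub
    rw [Set.ncard_sdiff_singleton_of_mem hb] at this
    exact ⟨(b, u), hbu, show 2 ≤ (S ∩ T.edgeSide u b).ncard by omega⟩
  obtain ⟨⟨u, w⟩, ⟨huw, h2⟩, hmin⟩ :=
    Set.exists_min_image P (fun p => (T.edgeSide p.2 p.1).ncard) (Set.toFinite P) hP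
  dsimp only at h2 hmin
  refine ⟨w, u, huw.symm, le_antisymm (ncard_inter_edgeSide_le_two (hdeg w) huw.symm ?_ ?_) h2⟩
  · intro hwS
    have := Set.ncard_le_ncard (hleaf w hwS u huw.symm)
    rw [Set.ncard_singleton] at this
    omega
  · intro z hwz hzu
    by_contra! hz
    exact (hmin (w, z) ⟨hwz, hz⟩).not_gt
      (Set.ncard_lt_ncard (hT.isAcyclic.edgeSide_ssubset hwz hzu))

end EdgeSide

section AddLeaf

variable {B : Type*} (T : SimpleGraph B)

def addLeaf (v : B) : SimpleGraph (Option B) :=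
  T.map Function.Embedding.some ⊔ edge (some v) none

variable {T}

lemma ncard_neighborSet_addLeaf_none (v : B) : ((T.addLeaf v).neighborSet none).ncard = 1 := by
  rw [Set.ncard_eq_one]
  refine ⟨some v, ?_⟩
  ext x; cases x <;> simp only [addLeaf, mem_neighborSet, sup_adj, map_adj, edge_adj] <;> simp

lemma ncard_neighborSet_addLeaf_self [Finite B] (v : B) :
    ((T.addLeaf v).neighborSet (some v)).ncard = (T.neighborSet v).ncard + 1 := by
  have : (T.addLeaf v).neighborSet (some v) = insert none (some '' T.neighborSet v) := by
    ext x; cases x <;> simp only [addLeaf, mem_neighborSet, sup_adj, map_adj, edge_adj] <;> simp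
  rw [this, Set.ncard_insert_of_notMem (by simp),
    Set.ncard_image_of_injective _ (Option.some_injective _)]

lemma ncard_neighborSet_addLeaf_of_ne {v b : B} (hb : b ≠ v) :
    ((T.addLeaf v).neighborSet (some b)).ncard = (T.neighborSet b).ncard := by
  have : (T.addLeaf v).neighborSet (some b) = some '' T.neighborSet b := by
    ext x
    cases x <;> simp only [addLeaf, mem_neighborSet, sup_adj, map_adj, edge_adj] <;> simp [hb]
  rw [this, Set.ncard_image_of_injective _ (Option.some_injective _)]

lemma IsTree.addLeaf [Finite B] (hT : T.IsTree) (v : B) : (T.addLeaf v).IsTree := by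
  rw [isTree_iff_connected_and_card] at hT ⊢
  refine ⟨(connected_iff_exists_forall_reachable _).2 ⟨some v, ?_⟩, ?_⟩
  · rintro (_ | b)
    · exact Adj.reachable (by simp [SimpleGraph.addLeaf, edge_adj])
    · exact ((hT.1.preconnected v b).map (Embedding.map .some T).toHom).mono le_sup_left
  · have hE : (T.addLeaf v).edgeSet = insert s(some v, none) (Sym2.map some '' T.edgeSet) := by
      rw [SimpleGraph.addLeaf, edgeSet_sup, edgeSet_map, edgeSet_edge, Set.union_comm]
      ext e
      by_cases he : e = s(some v, none) <;> simp [he]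
    rw [Nat.card_coe_set_eq, hE, Set.ncard_insert_of_notMem (by rintro ⟨⟨a, b⟩, _, h⟩; simp at h),
      Set.ncard_image_of_injective _ (Sym2.map.injective (Option.some_injective _)),
      ← Nat.card_coe_set_eq, hT.2, Finite.card_option]

lemma IsTree.two_mul_ncard_leaves [Finite B] (hT : T.IsTree)
    (hdeg : ∀ b, (T.neighborSet b).ncard = 1 ∨ (T.neighborSet b).ncard = 3) :
    2 * {b | (T.neighborSet b).ncard = 1}.ncard = Nat.card B + 2 := by
  classical
  have := Fintype.ofFinite B
  have hdegree (b : B) : T.degree b = (T.neighborSet b).ncard := by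
    rw [← card_neighborSet_eq_degree, ← Nat.card_eq_fintype_card, Nat.card_coe_set_eq]
  have hsum :
      ∑ b, (T.degree b + 2 * if (T.neighborSet b).ncard = 1 then 1 else 0) = ∑ _b : B, 3 := by
    refine Finset.sum_congr rfl fun b _ => ?_
    rcases hdeg b with h | h <;> simp [hdegree, h]
  rw [Finset.sum_add_distrib, ← Finset.mul_sum, Finset.sum_boole, T.sum_degrees_eq_twice_card_edges,
    Finset.sum_const, Finset.card_univ, smul_eq_mul] at hsum
  have hE := hT.card_edgeFinset
  rw [Set.ncard_eq_toFinset_card', Set.toFinset_ofPred, Nat.card_eq_fintype_card]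
  simp only [Nat.cast_id] at hsum
  omega

lemma exists_subcubic_tree (n : ℕ) : ∃ (B : Type) (_ : Finite B) (T : SimpleGraph B), T.IsTree ∧
    (∀ b, (T.neighborSet b).ncard = 1 ∨ (T.neighborSet b).ncard = 3) ∧ Nat.card B = 2 * n + 2 := by
  induction n with
  | zero =>
    refine ⟨Bool, inferInstance, ⊤, ⟨connected_top, .of_card_le_two (by simp)⟩, fun b => .inl ?_,
      by simp⟩
    cases b <;> simp [neighborSet_top]
  | succ n ih =>
    obtain ⟨B, _, T, hT, hdeg, hcard⟩ := ih
    obtain ⟨l, hl⟩ : {b | (T.neighborSet b).ncard = 1}.Nonempty :=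
      Set.nonempty_of_ncard_ne_zero (by have := hT.two_mul_ncard_leaves hdeg; omega)
    refine ⟨Option (Option B), inferInstance, (T.addLeaf l).addLeaf (some l),
      (hT.addLeaf l).addLeaf _, ?_, by simp [Finite.card_option, hcard]; ring⟩
    rintro (_ | _ | b)
    · simp [ncard_neighborSet_addLeaf_none]
    · simp [ncard_neighborSet_addLeaf_of_ne, ncard_neighborSet_addLeaf_none]
    · by_cases hb : b = l
      · subst hb
        simp only [ncard_neighborSet_addLeaf_self, hl.out]
        simp
      · rw [ncard_neighborSet_addLeaf_of_ne (by simpa), ncard_neighborSet_addLeaf_of_ne hb]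
        exact hdeg b

end AddLeaf

end SimpleGraph

section Matching

variable {V : Type*} [Finite V] (G : SimpleGraph V) (A : Set V)

lemma natCard_mem_upperBounds_matchings : Nat.card V ∈ upperBounds {n | ∃ M : Finset (V × V),
    (∀ p ∈ M, p.1 ∈ A ∧ p.2 ∉ A ∧ G.Adj p.1 p.2) ∧
    (∀ p ∈ M, ∀ q ∈ M, p ≠ q → p.1 ≠ q.1 ∧ p.2 ≠ q.2) ∧ M.card = n} := by
  rintro _ ⟨M, -, hM, rfl⟩
  rw [← Set.ncard_coe_finset, ← Set.ncard_univ]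
  exact Set.ncard_le_ncard_of_injOn Prod.fst (fun _ _ => Set.mem_univ _)
    fun p hp q hq hpq => by_contra fun hne => (hM p hp q hq hne).1 hpq

lemma mmVal_le_card : mmVal G A ≤ Nat.card V :=
  csSup_le' (natCard_mem_upperBounds_matchings G A)

lemma two_le_mmVal {x₁ y₁ x₂ y₂ : V} (h₁ : x₁ ∈ A ∧ y₁ ∉ A ∧ G.Adj x₁ y₁)
    (h₂ : x₂ ∈ A ∧ y₂ ∉ A ∧ G.Adj x₂ y₂) (hx : x₁ ≠ x₂) (hy : y₁ ≠ y₂) : 2 ≤ mmVal G A := by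
  classical
  refine le_csSup ⟨_, natCard_mem_upperBounds_matchings G A⟩
    ⟨{(x₁, y₁), (x₂, y₂)}, ?_, ?_, Finset.card_pair (by simp [hx])⟩
  · simp only [Finset.mem_insert, Finset.mem_singleton, forall_eq_or_imp, forall_eq]
    exact ⟨h₁, h₂⟩
  · simp only [Finset.mem_insert, Finset.mem_singleton]
    rintro p (rfl | rfl) q (rfl | rfl) hpq <;> simp_all [eq_comm]

end Matching

lemma injective_of_mem_of_disjoint {ι α : Type*} {φ : ι → Set α}
    (hφ : ∀ i j, i ≠ j → Disjoint (φ i) (φ j)) {a : ι → α} (ha : ∀ i, a i ∈ φ i) :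
    Function.Injective a := fun i j hij =>
  by_contra fun hne => Set.disjoint_left.1 (hφ i j hne) (ha i) (hij ▸ ha j)

lemma IsMinor.card_le {W V : Type*} [Finite V] {H : SimpleGraph W} {G : SimpleGraph V}
    (h : IsMinor H G) : Nat.card W ≤ Nat.card V := by
  obtain ⟨φ, hne, -, hdisj, -⟩ := h
  choose a ha using hne
  exact Nat.card_le_card_of_injective a (injective_of_mem_of_disjoint hdisj ha)

lemma SimpleGraph.exists_adj_of_induce_connected {V : Type*} {G : SimpleGraph V} {s A : Set V}
    (hs : (G.induce s).Connected) (hA : (s ∩ A).Nonempty) (hA' : (s \ A).Nonempty) :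
    ∃ x ∈ s, ∃ y ∈ s, x ∈ A ∧ y ∉ A ∧ G.Adj x y := by
  obtain ⟨p, hp, hpA⟩ := hA
  obtain ⟨q, hq, hqA⟩ := hA'
  obtain ⟨d, -, hd, hd'⟩ := (hs.preconnected ⟨p, hp⟩ ⟨q, hq⟩).some.exists_boundary_dart
    (Subtype.val ⁻¹' A) hpA hqA
  exact ⟨_, d.fst.2, _, d.snd.2, hd, hd', d.adj⟩

/-- For a cut `A` and a `C₄`-model `φ` with representatives `a i ∈ φ i`, `P` stands for the indices
with `a i ∈ A` and `Q` for those whose branch set meets both sides of the cut; a crossing pair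
`(i, j)` then provides an edge from `φ i ∩ A` to `φ j \ A`. -/
def C4CrossingPair (P Q : Finset (Fin 4)) (i j : Fin 4) : Prop :=
  (i = j ∧ i ∈ Q) ∨ ((cycleGraph 4).Adj i j ∧ i ∉ Q ∧ j ∉ Q ∧ i ∈ P ∧ j ∉ P)

instance (P Q : Finset (Fin 4)) : DecidableRel (C4CrossingPair P Q) := fun _ _ => by
  unfold C4CrossingPair; infer_instance

lemma exists_two_C4CrossingPairs (P Q : Finset (Fin 4)) (hP : P.card = 2) :
    ∃ i j k l, i ≠ k ∧ j ≠ l ∧ C4CrossingPair P Q i j ∧ C4CrossingPair P Q k l := by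
  revert P Q; decide

namespace BranchDecomp

variable {V : Type*} {G : SimpleGraph V}

lemma exists_adj_ncard_inter_side_eq_two (D : BranchDecomp G) {R : Set V} (hR : 3 ≤ R.ncard) :
    ∃ u w, D.T.Adj u w ∧ (R ∩ D.side u w).ncard = 2 := by
  have := D.finB
  have hι : Function.Injective fun x => (D.L.symm x).1 :=
    Subtype.val_injective.comp D.L.symm.injective
  obtain ⟨u, w, huw, h2⟩ := D.isTree.exists_adj_ncard_inter_edgeSide_eq_two
    (fun v => by rcases D.subcubic v with h | h <;> omega) (S := (fun x => (D.L.symm x).1) '' R)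
    (by rintro _ ⟨x, -, rfl⟩; exact (D.L.symm x).2) (by rwa [Set.ncard_image_of_injective _ hι])
  rw [← Set.image_inter_preimage, Set.ncard_image_of_injective _ hι] at h2
  exact ⟨u, w, huw, h2⟩

lemma nonempty_of_two_le_card [Finite V] (G : SimpleGraph V) (hV : 2 ≤ Nat.card V) :
    Nonempty (BranchDecomp G) := by
  obtain ⟨B, _, T, hT, hdeg, hB⟩ := exists_subcubic_tree (Nat.card V - 2)
  have hleaves := hT.two_mul_ncard_leaves hdeg
  obtain ⟨L⟩ := Finite.card_eq.1 (show Nat.card {b // (T.neighborSet b).ncard = 1} = Nat.card V by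
    rw [← Set.coe_ofPred, Nat.card_coe_set_eq]; omega)
  exact ⟨⟨B, ‹_›, T, hT, hdeg, L⟩⟩

lemma two_le_of_widthLE [Finite V] (h : IsMinor (cycleGraph 4) G) {D : BranchDecomp G} {k : ℕ}
    (hD : D.widthLE k) : 2 ≤ k := by
  classical
  obtain ⟨φ, hne, hconn, hdisj, hedge⟩ := h
  choose a ha using hne
  have ha_inj := injective_of_mem_of_disjoint hdisj ha
  obtain ⟨u, w, huw, h2⟩ := D.exists_adj_ncard_inter_side_eq_two (R := Set.range a)
    (by rw [Set.ncard_range_of_injective ha_inj]; simp)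
  set A := D.side u w
  let P := Finset.univ.filter fun i => a i ∈ A
  let Q := Finset.univ.filter fun i => (φ i ∩ A).Nonempty ∧ (φ i \ A).Nonempty
  have hP : P.card = 2 := by
    rw [← h2, ← Set.image_preimage_eq_range_inter, Set.ncard_image_of_injective _ ha_inj,
      ← Set.ncard_coe_finset, Finset.coe_filter]
    simp only [Finset.mem_univ, true_and]
    rfl
  have hcross (i j : Fin 4) (hij : C4CrossingPair P Q i j) :
      ∃ x ∈ φ i, ∃ y ∈ φ j, x ∈ A ∧ y ∉ A ∧ G.Adj x y := by
    rcases hij with ⟨rfl, hi⟩ | ⟨hij, hi, hj, hiA, hjA⟩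
    · simp only [Q, Finset.mem_filter, Finset.mem_univ, true_and] at hi
      exact exists_adj_of_induce_connected (hconn i) hi.1 hi.2
    · simp only [P, Q, Finset.mem_filter, Finset.mem_univ, true_and, not_and] at hi hj hiA hjA
      obtain ⟨x, hx, y, hy, hxy⟩ := hedge i j hij
      exact ⟨x, hx, y, hy, by_contra fun hxA => hi ⟨a i, ha i, hiA⟩ ⟨x, hx, hxA⟩,
        fun hyA => hj ⟨y, hy, hyA⟩ ⟨a j, ha j, hjA⟩, hxy⟩
  obtain ⟨i, j, i', j', hi, hj, hij, hij'⟩ := exists_two_C4CrossingPairs P Q hP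
  obtain ⟨x₁, hx₁, y₁, hy₁, h₁⟩ := hcross i j hij
  obtain ⟨x₂, hx₂, y₂, hy₂, h₂⟩ := hcross i' j' hij'
  have hx : x₁ ≠ x₂ := ne_of_mem_of_not_mem hx₁ (Set.disjoint_right.1 (hdisj i i' hi) hx₂)
  have hy : y₁ ≠ y₂ := ne_of_mem_of_not_mem hy₁ (Set.disjoint_right.1 (hdisj j j' hj) hy₂)
  exact (two_le_mmVal G A h₁ h₂ hx hy).trans (hD u w huw)

end BranchDecomp

/-- a `C₄` minor forces mm-width at least 2. -/
theorem two_le_mmw_of_C4_minor (V : Type) [Finite V] (G : SimpleGraph V)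
    (h : IsMinor (SimpleGraph.cycleGraph 4) G) : 2 ≤ mmw G := by
  have hV : 4 ≤ Nat.card V := by simpa using h.card_le
  obtain ⟨D⟩ := BranchDecomp.nonempty_of_two_le_card G (by omega)
  obtain ⟨D', hD'⟩ := Nat.sInf_mem (s := {k | ∃ D : BranchDecomp G, D.widthLE k})
    ⟨_, D, fun _ _ _ => mmVal_le_card G _⟩
  exact BranchDecomp.two_le_of_widthLE h hD'
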